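/- Let C_* be the based chain complex 0 → V^{n-1} → V^n → V → 0 of finite-dimensional vector spaces over a field, with second boundary map given by a matrix B (of maps V^{n-1} → V^n) and first boundary map (D_1, …, D_n): V^n → V. Fix an index i with D_i invertible, and let B_i be B with the i-th block row deleted. If det(B_i) = 0 (as a linear map V^{n-1} → V^{n-1}), then the complex is not acyclic; specifically, H_2 ≠ 0. -/
import Mathlib


/-- Consider a based chain complex `0 → V^n → V^{n+1} → V → 0` with second
boundary map given by a block matrix `B` of linear maps and first boundary
map `(D_0, …, D_n)`. Fix `i` with `D i` invertible, and let `B_i` denote `B`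
with the `i`-th block row deleted, an endomorphism of `V^n`. If
`det(B_i) = 0`, then the kernel of the second boundary map is nonzero, i.e.
`H₂ ≠ 0` and the complex is not acyclic. -/
theorem ker_of_deleted_row_det_zero (F : Type*) [Field F]
    (V : Type*) [AddCommGroup V] [Module F V] [FiniteDimensional F V]
    (n : ℕ) (B : Fin (n + 1) → Fin n → (V →ₗ[F] V))
    (D : Fin (n + 1) → (V →ₗ[F] V)) (i : Fin (n + 1))
    (hD : Function.Bijective (D i))
    (hcomplex : ∀ (j : Fin n) (x : V), ∑ l : Fin (n + 1), D l (B l j x) = 0)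
    (hdet : LinearMap.det
      (LinearMap.pi (fun k : Fin n =>
        ∑ j : Fin n, (B (i.succAbove k) j) ∘ₗ (LinearMap.proj j)) :
        (Fin n → V) →ₗ[F] (Fin n → V)) = 0) :
    ∃ w : Fin n → V, w ≠ 0 ∧ ∀ l : Fin (n + 1), ∑ j : Fin n, B l j (w j) = 0 := by
  have hker := LinearMap.bot_lt_ker_of_det_eq_zero hdet
  obtain ⟨w, hwker, hw0⟩ := SetLike.exists_of_lt hker
  simp only [LinearMap.mem_ker, LinearMap.pi_apply] at hwker
  have hrow : ∀ k : Fin n, ∑ j : Fin n, B (i.succAbove k) j (w j) = 0 := by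
    intro k
    have := congrFun hwker k
    simpa [LinearMap.sum_apply, LinearMap.comp_apply] using this
  have hi : ∑ j : Fin n, B i j (w j) = 0 := by
    have hsum : ∑ l : Fin (n + 1), D l (∑ j : Fin n, B l j (w j)) = 0 := by
      simp_rw [map_sum]
      rw [Finset.sum_comm]
      exact Finset.sum_eq_zero fun j _ => hcomplex j (w j)
    rw [Fin.sum_univ_succAbove _ i] at hsum
    simp only [hrow, map_zero, Finset.sum_const_zero, add_zero] at hsum
    exact hD.injective (a₁ := ∑ j : Fin n, B i j (w j)) (a₂ := 0) (by simpa using hsum)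
  refine ⟨w, by simpa using hw0, fun l => ?_⟩
  rcases eq_or_ne l i with rfl | hl
  · exact hi
  · obtain ⟨k, hk⟩ := Fin.exists_succAbove_eq hl
    rw [← hk]; exact hrow k
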